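/- Kleene-type characterisation: let 𝓡 be the smallest family of maps Fin p → Set (Σ* × Fin q) (over all p, q ∈ ℕ) such that (a) for every χ : Fin p → Set (Fin q), the map i ↦ {(ε, j) | j ∈ χ(i)} belongs to 𝓡; (b) for every automaton α : Fin m → Set (Σ × Fin m), its saturation α* : Fin m → Set (Σ* × Fin m), α*(i) = {(w, j) | i →_w j}, belongs to 𝓡; (c) 𝓡 is closed under Kleisli composition (r₂ · r₁)(i) = {(v ++ w, j) | ∃ m, (v, m) ∈ r₁(i) ∧ (w, j) ∈ r₂(m)} and under cotupling. Then 𝓡 coincides exactly with the family of regular maps. -/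

import Mathlib

/-- `Reach α x w y` means `x →_w y` in the nondeterministic automaton `α`. -/
inductive Reach {σ X : Type*} (α : X → Set (σ × X)) : X → List σ → X → Prop
  | nil (x : X) : Reach α x [] x
  | cons {x y z : X} {a : σ} {w : List σ} :
      (a, y) ∈ α x → Reach α y w z → Reach α x (a :: w) z

/-- A map `r : Fin p → Set (Σ* × Fin q)` is regular if each of its components is
the behaviour of a state in a finite nondeterministic automaton. -/
def Regular {σ : Type*} {p q : ℕ} (r : Fin p → Set (List σ × Fin q)) : Prop :=
  ∀ i : Fin p, ∃ (n : ℕ) (α : Fin n → Set (σ × Fin n)) (s : Fin n)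
    (χ : Fin n → Set (Fin q)),
      r i = {wj : List σ × Fin q | ∃ k : Fin n, Reach α s wj.1 k ∧ wj.2 ∈ χ k}

/-- The smallest family of maps containing all maps `i ↦ {(ε, j) | j ∈ χ i}`, all
saturations of automata, and closed under Kleisli composition and cotupling. -/
inductive Gen {σ : Type*} : ∀ p q : ℕ, (Fin p → Set (List σ × Fin q)) → Prop
  | base {p q : ℕ} (χ : Fin p → Set (Fin q)) :
      Gen p q (fun i => {wj : List σ × Fin q | wj.1 = [] ∧ wj.2 ∈ χ i})
  | sat {m : ℕ} (α : Fin m → Set (σ × Fin m)) :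
      Gen m m (fun i => {wj : List σ × Fin m | Reach α i wj.1 wj.2})
  | comp {p k q : ℕ} {r₁ : Fin p → Set (List σ × Fin k)}
      {r₂ : Fin k → Set (List σ × Fin q)} :
      Gen p k r₁ → Gen k q r₂ →
      Gen p q (fun i => {wj : List σ × Fin q |
        ∃ (v w : List σ) (m : Fin k), wj.1 = v ++ w ∧ (v, m) ∈ r₁ i ∧ (w, wj.2) ∈ r₂ m})
  | cotuple {p p' q : ℕ} {r : Fin p → Set (List σ × Fin q)}
      {r' : Fin p' → Set (List σ × Fin q)} :
      Gen p q r → Gen p' q r' → Gen (p + p') q (Fin.addCases r r')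

/-!
A generated map is regular: the empty automaton realises the maps of type (a), the saturation
of `α` is realised by `α` itself with the diagonal output, and a Kleisli composite of two
behaviours is the behaviour of the automaton that runs the first one and, from any state
whose output contains `m`, continues with the first step of the automaton for `m`. Conversely
a single behaviour `s →_w k, j ∈ χ k` is the composite of (a) with output `{s}`, the
saturation of the automaton, and (a) with output `χ`; a regular map is the cotupling of its
components.
-/

section Kleene

variable {σ : Type*}

namespace Reach

variable {X : Type*}

theorem map {Y : Type*} {α : X → Set (σ × X)} {β : Y → Set (σ × Y)} (f : X → Y)
    (hf : ∀ x a x', (a, x') ∈ α x → (a, f x') ∈ β (f x)) {x x' : X} {w : List σ}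
    (h : Reach α x w x') : Reach β (f x) w (f x') := by
  induction h with
  | nil x => exact .nil _
  | cons hs _ ih => exact .cons (hf _ _ _ hs) ih

theorem append {α : X → Set (σ × X)} {x y z : X} {v w : List σ}
    (h₁ : Reach α x v y) (h₂ : Reach α y w z) : Reach α x (v ++ w) z := by
  induction h₁ with
  | nil => exact h₂
  | cons hs _ ih => exact .cons hs (ih h₂)

theorem empty_iff {x y : X} {w : List σ} :
    Reach (fun _ : X => (∅ : Set (σ × X))) x w y ↔ w = [] ∧ y = x := by
  constructor
  · rintro (_ | ⟨hs, _⟩)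
    · exact ⟨rfl, rfl⟩
    · exact absurd hs (Set.notMem_empty _)
  · rintro ⟨rfl, rfl⟩
    exact .nil _

end Reach

def behaviour {X Q : Type*} (α : X → Set (σ × X)) (χ : X → Set Q) (s : X) :
    Set (List σ × Q) :=
  {wj | ∃ k, Reach α s wj.1 k ∧ wj.2 ∈ χ k}

def IsBehaviour {Q : Type*} (L : Set (List σ × Q)) : Prop :=
  ∃ (n : ℕ) (α : Fin n → Set (σ × Fin n)) (s : Fin n) (χ : Fin n → Set Q), L = behaviour α χ s

def kleisliComp {K Q : Type*} (L : Set (List σ × K)) (r : K → Set (List σ × Q)) :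
    Set (List σ × Q) :=
  {wj | ∃ (v w : List σ) (m : K), wj.1 = v ++ w ∧ (v, m) ∈ L ∧ (w, wj.2) ∈ r m}

theorem behaviour_empty {X Q : Type*} (χ : X → Set Q) (s : X) :
    behaviour (fun _ => (∅ : Set (σ × X))) χ s = {wj | wj.1 = [] ∧ wj.2 ∈ χ s} := by
  ext ⟨w, j⟩
  simp [behaviour, Reach.empty_iff]

theorem behaviour_singleton {X : Type*} (α : X → Set (σ × X)) (s : X) :
    behaviour α (fun k => {k}) s = {wj | Reach α s wj.1 wj.2} := by
  ext ⟨w, j⟩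
  simp [behaviour]

theorem behaviour_equiv {X Y Q : Type*} (e : X ≃ Y) (α : X → Set (σ × X)) (χ : X → Set Q)
    (s : X) :
    behaviour (fun y => {p | (p.1, e.symm p.2) ∈ α (e.symm y)}) (χ ∘ e.symm) (e s) =
      behaviour α χ s := by
  ext ⟨w, j⟩
  constructor
  · rintro ⟨k, hk, hj⟩
    refine ⟨e.symm k, ?_, hj⟩
    simpa using Reach.map e.symm (fun y a y' h => h) hk
  · rintro ⟨k, hk, hj⟩
    exact ⟨e k, Reach.map e (fun x a x' h => by simpa using h) hk, by simpa using hj⟩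

theorem isBehaviour_of_finite {X Q : Type*} [Finite X] (α : X → Set (σ × X)) (χ : X → Set Q)
    (s : X) : IsBehaviour (behaviour α χ s) := by
  obtain ⟨n, ⟨e⟩⟩ := Finite.exists_equiv_fin X
  exact ⟨n, _, e s, χ ∘ e.symm, (behaviour_equiv e α χ s).symm⟩

section KleisliComp

variable {X K Q : Type*} {Y : K → Type*} (α₁ : X → Set (σ × X)) (χ₁ : X → Set K)
  (α₂ : ∀ m, Y m → Set (σ × Y m)) (s₂ : ∀ m, Y m)

def compAut : X ⊕ (Σ m, Y m) → Set (σ × (X ⊕ Σ m, Y m))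
  | .inl x => {p | (∃ x', p.2 = .inl x' ∧ (p.1, x') ∈ α₁ x) ∨
      ∃ m y, p.2 = .inr ⟨m, y⟩ ∧ m ∈ χ₁ x ∧ (p.1, y) ∈ α₂ m (s₂ m)}
  | .inr my => {p | ∃ y', p.2 = .inr ⟨my.1, y'⟩ ∧ (p.1, y') ∈ α₂ my.1 my.2}

def compOut (χ₂ : ∀ m, Y m → Set Q) : X ⊕ (Σ m, Y m) → Set Q :=
  Sum.elim (fun x => {j | ∃ m ∈ χ₁ x, j ∈ χ₂ m (s₂ m)}) (fun my => χ₂ my.1 my.2)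

variable {α₁ χ₁ α₂ s₂}

theorem reach_compAut_inr_iff {m : K} {y : Y m} {w : List σ} {z : X ⊕ Σ m, Y m} :
    Reach (compAut α₁ χ₁ α₂ s₂) (.inr ⟨m, y⟩) w z ↔
      ∃ y', z = .inr ⟨m, y'⟩ ∧ Reach (α₂ m) y w y' := by
  constructor
  · generalize hs : (Sum.inr ⟨m, y⟩ : X ⊕ Σ m, Y m) = s
    intro h
    induction h generalizing y with
    | nil => exact ⟨y, hs.symm, .nil _⟩
    | cons ha _ ih =>
      subst hs
      obtain ⟨y₁, rfl, ha⟩ := ha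
      obtain ⟨y', rfl, hr⟩ := ih rfl
      exact ⟨y', rfl, .cons ha hr⟩
  · rintro ⟨y', rfl, h⟩
    exact Reach.map (Sum.inr (α := X) ∘ Sigma.mk m) (fun _ _ y' hy => by exact ⟨y', rfl, hy⟩) h

theorem Reach.compAut_inl {x x' : X} {w : List σ} (h : Reach α₁ x w x') :
    Reach (compAut α₁ χ₁ α₂ s₂) (.inl x) w (.inl x') :=
  Reach.map Sum.inl (fun _ _ x' hx => .inl ⟨x', rfl, hx⟩) h

theorem Reach.compAut_inl_cases {x : X} {w : List σ} {z : X ⊕ Σ m, Y m}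
    (h : Reach (compAut α₁ χ₁ α₂ s₂) (.inl x) w z) :
    (∃ x', z = .inl x' ∧ Reach α₁ x w x') ∨
      ∃ v w' x' m y, w = v ++ w' ∧ z = .inr ⟨m, y⟩ ∧ Reach α₁ x v x' ∧ m ∈ χ₁ x' ∧
        Reach (α₂ m) (s₂ m) w' y := by
  generalize hs : (Sum.inl x : X ⊕ Σ m, Y m) = s at h
  induction h generalizing x with
  | nil => exact .inl ⟨x, hs.symm, .nil _⟩
  | cons ha hrest ih =>
    subst hs
    rcases ha with ⟨x₁, rfl, ha⟩ | ⟨m, y₀, rfl, hm, ha⟩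
    · rcases ih rfl with ⟨x', rfl, hr⟩ | ⟨v, w', x', m, y, rfl, rfl, hr, hm, hr₂⟩
      · exact .inl ⟨x', rfl, .cons ha hr⟩
      · exact .inr ⟨_ :: v, w', x', m, y, rfl, rfl, .cons ha hr, hm, hr₂⟩
    · obtain ⟨y', rfl, hr⟩ := reach_compAut_inr_iff.1 hrest
      exact .inr ⟨[], _, x, m, y', rfl, rfl, .nil _, hm, .cons ha hr⟩

theorem behaviour_compAut (χ₂ : ∀ m, Y m → Set Q) (s₁ : X) :
    behaviour (compAut α₁ χ₁ α₂ s₂) (compOut χ₁ s₂ χ₂) (.inl s₁) =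
      kleisliComp (behaviour α₁ χ₁ s₁) (fun m => behaviour (α₂ m) (χ₂ m) (s₂ m)) := by
  ext ⟨w, j⟩
  constructor
  · rintro ⟨z, hr, hj⟩
    rcases hr.compAut_inl_cases with ⟨x', rfl, hrx⟩ | ⟨v, w', x', m, y, rfl, rfl, hrx, hm, hry⟩
    · obtain ⟨m, hm, hjm⟩ := hj
      exact ⟨w, [], m, (List.append_nil w).symm, ⟨x', hrx, hm⟩, ⟨s₂ m, .nil _, hjm⟩⟩
    · exact ⟨v, w', m, rfl, ⟨x', hrx, hm⟩, ⟨y, hry, hj⟩⟩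
  · rintro ⟨v, w', m, rfl, ⟨x', hrx, hm⟩, ⟨y, hry, hj⟩⟩
    cases hry with
    | nil => exact ⟨.inl x', by simpa using Reach.compAut_inl hrx, m, hm, hj⟩
    | cons ha hrest =>
      exact ⟨.inr ⟨m, y⟩, (Reach.compAut_inl hrx).append
        (.cons (.inr ⟨m, _, rfl, hm, ha⟩) (reach_compAut_inr_iff.2 ⟨y, rfl, hrest⟩)), hj⟩

end KleisliComp

theorem IsBehaviour.kleisliComp {K Q : Type*} [Finite K] {L : Set (List σ × K)}
    {r : K → Set (List σ × Q)} (hL : IsBehaviour L) (hr : ∀ m, IsBehaviour (r m)) :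
    IsBehaviour (kleisliComp L r) := by
  obtain ⟨n₁, α₁, s₁, χ₁, rfl⟩ := hL
  choose n₂ α₂ s₂ χ₂ hr using hr
  rw [funext hr, ← behaviour_compAut]
  exact isBehaviour_of_finite _ _ _

theorem Gen.regular {p q : ℕ} {r : Fin p → Set (List σ × Fin q)} (h : Gen p q r) :
    Regular r := by
  induction h with
  | base χ => exact fun i => ⟨_, _, i, χ, (behaviour_empty χ i).symm⟩
  | sat α => exact fun i => ⟨_, α, i, _, (behaviour_singleton α i).symm⟩
  | comp _ _ ih₁ ih₂ => exact fun i => IsBehaviour.kleisliComp (ih₁ i) ih₂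
  | cotuple _ _ ih₁ ih₂ =>
    intro i
    induction i using Fin.addCases with
    | left i => simpa using ih₁ i
    | right i => simpa using ih₂ i

theorem Gen.of_behaviour {n q : ℕ} (α : Fin n → Set (σ × Fin n)) (s : Fin n)
    (χ : Fin n → Set (Fin q)) : Gen 1 q (fun _ => behaviour α χ s) := by
  convert (Gen.base fun _ : Fin 1 => {s}).comp (Gen.sat α) |>.comp (Gen.base χ) using 1
  ext _ ⟨w, j⟩
  constructor
  · rintro ⟨k, hk, hj⟩
    exact ⟨w, [], k, (List.append_nil w).symm, ⟨[], w, s, rfl, ⟨rfl, rfl⟩, hk⟩, rfl, hj⟩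
  · rintro ⟨_, _, k, rfl, ⟨_, _, _, rfl, ⟨rfl, rfl⟩, hk⟩, rfl, hj⟩
    exact ⟨k, by simpa using hk, hj⟩

theorem Gen.of_rows : ∀ {p q : ℕ} {r : Fin p → Set (List σ × Fin q)},
    (∀ i, Gen 1 q (fun _ => r i)) → Gen p q r
  | 0, q, r, _ => by
    convert Gen.base (σ := σ) fun _ : Fin 0 => (∅ : Set (Fin q))
  | p + 1, q, r, h => by
    convert (Gen.of_rows fun i => h (Fin.castAdd 1 i)).cotuple (h (Fin.last p)) using 1
    funext i
    induction i using Fin.addCases with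
    | left i => simp
    | right i => simp [Fin.fin_one_eq_zero i]; rfl

theorem Regular.gen {p q : ℕ} {r : Fin p → Set (List σ × Fin q)} (h : Regular r) :
    Gen p q r :=
  Gen.of_rows fun i => by
    obtain ⟨n, α, s, χ, hi⟩ := h i
    exact hi ▸ Gen.of_behaviour α s χ

end Kleene

/-- Kleene-type characterisation: the smallest family containing the branching-type
maps and the saturations of automata, closed under Kleisli composition and cotupling,
is exactly the family of regular maps. -/
theorem stmt16 {σ : Type*} (p q : ℕ) (r : Fin p → Set (List σ × Fin q)) :
    Gen p q r ↔ Regular r :=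
  ⟨Gen.regular, Regular.gen⟩
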